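/- Let a ∈ M_n(ℂ). If there exist positive semidefinite b, c ∈ M_n(ℂ) with b_{ii} ≤ 1, c_{ii} ≤ 1 for all i, such that the block matrix [[b, a*],[a, c]] ∈ M_{2n}(ℂ) is positive semidefinite, then the Schur multiplier norm of a satisfies ‖a‖_S ≤ 1, i.e., ‖a ∘ x‖ ≤ ‖x‖ for all x ∈ M_n(ℂ). -/

import Mathlib

/-!
A contraction `x` is exactly a matrix for which `[[1, x*], [x, 1]]` is positive semidefinite
(its Schur complement is `1 - x x*`). By the Schur product theorem,
`[[b, a*], [a, c]] ∘ [[1, x*], [x, 1]] = [[diag b, (a ∘ x)*], [a ∘ x, diag c]]` is then positive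
semidefinite, and adding the positive diagonal `diag (1 - b, 1 - c)` shows that
`[[1, (a ∘ x)*], [a ∘ x, 1]]` is too, i.e. `a ∘ x` is a contraction. Homogeneity of `x ↦ a ∘ x`
turns this into `‖a ∘ x‖ ≤ ‖x‖`.
-/

open scoped ComplexOrder

noncomputable section

/-- The operator norm of a complex `n × n` matrix, acting on `ℓ²({1,…,n})`. -/
def opNorm {m : Type*} [Fintype m] [DecidableEq m] (a : Matrix m m ℂ) : ℝ :=
  ‖Matrix.toEuclideanCLM (𝕜 := ℂ) a‖

theorem LinearMap.norm_apply_le_of_forall_norm_le_one {𝕜 E F : Type*} [RCLike 𝕜]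
    [NormedAddCommGroup E] [NormedSpace 𝕜 E] [SeminormedAddCommGroup F] [NormedSpace 𝕜 F]
    (f : E →ₗ[𝕜] F) (h : ∀ x, ‖x‖ ≤ 1 → ‖f x‖ ≤ 1) (x : E) : ‖f x‖ ≤ ‖x‖ := by
  rcases eq_or_ne x 0 with rfl | hx
  · simp
  have := h ((‖x‖⁻¹ : 𝕜) • x) (norm_smul_inv_norm hx).le
  rwa [map_smul, norm_smul, norm_inv, RCLike.norm_ofReal, abs_norm,
    inv_mul_le_iff₀ (norm_pos_iff.2 hx), mul_one] at this

theorem Complex.le_one_of_nonneg_of_re_le_one {z : ℂ} (h₀ : 0 ≤ z) (h₁ : z.re ≤ 1) : z ≤ 1 :=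
  Complex.le_def.2 ⟨h₁, (Complex.le_def.1 h₀).2.symm⟩

namespace Matrix

variable {l m n o α : Type*}

def schurMultiplier (R : Type*) [CommSemiring R] [NonUnitalNonAssocSemiring α] [Module R α]
    [SMulCommClass R α α] (a : Matrix m n α) : Matrix m n α →ₗ[R] Matrix m n α where
  toFun := (a ⊙ ·)
  map_add' x y := hadamard_add a x y
  map_smul' k x := hadamard_smul a x k

theorem fromBlocks_hadamard_fromBlocks [Mul α] (A A' : Matrix n l α) (B B' : Matrix n m α)
    (C C' : Matrix o l α) (D D' : Matrix o m α) :
    fromBlocks A B C D ⊙ fromBlocks A' B' C' D' =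
      fromBlocks (A ⊙ A') (B ⊙ B') (C ⊙ C') (D ⊙ D') := by
  ext (i | i) (j | j) <;> rfl

variable [Fintype n] [DecidableEq n]

open scoped Norms.L2Operator MatrixOrder in
theorem opNorm_le_one_iff_posSemidef_one_sub_mul_conjTranspose (x : Matrix n n ℂ) :
    opNorm x ≤ 1 ↔ (1 - x * xᴴ).PosSemidef := by
  change ‖x‖ ≤ 1 ↔ x * star x ≤ 1
  rw [← CStarAlgebra.norm_le_one_iff_of_nonneg _ (mul_star_self_nonneg x),
    CStarRing.norm_self_mul_star, ← sq, sq_le_one_iff₀ (norm_nonneg _)]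

theorem posSemidef_fromBlocks_one_iff (x : Matrix n n ℂ) :
    (fromBlocks 1 xᴴ x 1).PosSemidef ↔ opNorm x ≤ 1 := by
  have : Invertible (1 : Matrix n n ℂ) := invertibleOne
  have := PosDef.fromBlocks₁₁ xᴴ (1 : Matrix n n ℂ) PosDef.one
  rw [conjTranspose_conjTranspose, inv_one, Matrix.mul_one] at this
  rw [this, opNorm_le_one_iff_posSemidef_one_sub_mul_conjTranspose]

theorem opNorm_le_one_of_posSemidef_fromBlocks_diagonal {d₁ d₂ : n → ℂ} {y : Matrix n n ℂ}
    (h : (fromBlocks (diagonal d₁) yᴴ y (diagonal d₂)).PosSemidef) (hd₁ : d₁ ≤ 1)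
    (hd₂ : d₂ ≤ 1) : opNorm y ≤ 1 := by
  have hgap : (diagonal (Sum.elim (1 - d₁) (1 - d₂))).PosSemidef :=
    posSemidef_diagonal_iff.2 fun
      | .inl i => sub_nonneg.2 (hd₁ i)
      | .inr i => sub_nonneg.2 (hd₂ i)
  rw [← posSemidef_fromBlocks_one_iff]
  convert h.add hgap using 1
  rw [← fromBlocks_diagonal, fromBlocks_add, diagonal_add, diagonal_add]
  simp

theorem opNorm_hadamard_le_one {a b c x : Matrix n n ℂ}
    (hblock : (fromBlocks b aᴴ a c).PosSemidef) (hb : b.diag ≤ 1) (hc : c.diag ≤ 1)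
    (hx : opNorm x ≤ 1) : opNorm (a ⊙ x) ≤ 1 := by
  have hK := hblock.hadamard ((posSemidef_fromBlocks_one_iff x).2 hx)
  rw [fromBlocks_hadamard_fromBlocks, hadamard_one, hadamard_one, hadamard_comm,
    ← conjTranspose_hadamard] at hK
  exact opNorm_le_one_of_posSemidef_fromBlocks_diagonal hK hb hc

end Matrix

theorem schur_le_one_of_posSemidef_block_general {n : ℕ} (a b c : Matrix (Fin n) (Fin n) ℂ)
    (hbd : ∀ i, Complex.re (b i i) ≤ 1) (hcd : ∀ i, Complex.re (c i i) ≤ 1)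
    (hblock : (Matrix.fromBlocks b a.conjTranspose a c).PosSemidef) :
    ∀ x : Matrix (Fin n) (Fin n) ℂ, opNorm (Matrix.hadamard a x) ≤ opNorm x := by
  have hb : b.diag ≤ 1 := fun i ↦
    Complex.le_one_of_nonneg_of_re_le_one (hblock.diag_nonneg (i := .inl i)) (hbd i)
  have hc : c.diag ≤ 1 := fun i ↦
    Complex.le_one_of_nonneg_of_re_le_one (hblock.diag_nonneg (i := .inr i)) (hcd i)
  open scoped Matrix.Norms.L2Operator in
  exact (Matrix.schurMultiplier ℂ a).norm_apply_le_of_forall_norm_le_one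
    fun x hx ↦ Matrix.opNorm_hadamard_le_one hblock hb hc hx

/-- If there are positive semidefinite `b, c` with diagonal entries `≤ 1` such that the block
matrix `[[b, a*], [a, c]]` is positive semidefinite, then `‖a ∘ x‖ ≤ ‖x‖` for every `x`,
i.e. the Schur multiplier norm of `a` is at most `1`. -/
theorem schur_le_one_of_posSemidef_block {n : ℕ} (a b c : Matrix (Fin n) (Fin n) ℂ)
    (hb : b.PosSemidef) (hc : c.PosSemidef)
    (hbd : ∀ i, Complex.re (b i i) ≤ 1) (hcd : ∀ i, Complex.re (c i i) ≤ 1)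
    (hblock : (Matrix.fromBlocks b a.conjTranspose a c).PosSemidef) :
    ∀ x : Matrix (Fin n) (Fin n) ℂ, opNorm (Matrix.hadamard a x) ≤ opNorm x :=
  schur_le_one_of_posSemidef_block_general a b c hbd hcd hblock

end
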